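/- arXiv:1902.06563 — 4 statements merged into one kernel-verified Lean document; each statement's English description precedes it below -/
import Mathlib

section
/- Let d be a positive real number and let m be the smallest positive integer such that d^m is a positive integer. Then any positive integer q with d^q a positive integer is a multiple of m. -/
/-- If `m` is the smallest positive integer such that `d ^ m` is a positive integer
(`d > 0` real), then any positive integer `q` with `d ^ q` a positive integer is a
multiple of `m`. -/
theorem dvd_of_pow_nat (d : ℝ) (hd : 0 < d) (m : ℕ)
    (hm : IsLeast {m : ℕ | 0 < m ∧ ∃ z : ℕ, 0 < z ∧ d ^ m = (z : ℝ)} m)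
    (q : ℕ) (hq : 0 < q) (h : ∃ z : ℕ, 0 < z ∧ d ^ q = (z : ℝ)) :
    m ∣ q := by
  obtain ⟨⟨hm0, A, hA0, hA⟩, hmin⟩ := hm
  obtain ⟨B, hB0, hB⟩ := h
  set g := Nat.gcd m q with hg
  have hg0 : 0 < g := Nat.gcd_pos_of_pos_left q hm0
  have hgm : g ∣ m := Nat.gcd_dvd_left m q
  have hgq : g ∣ q := Nat.gcd_dvd_right m q
  have hdne : d ≠ 0 := ne_of_gt hd
  -- Bezout
  set a := Nat.gcdA m q with ha
  set b := Nat.gcdB m q with hb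
  have hbez : (g : ℤ) = m * a + q * b := Nat.gcd_eq_gcd_ab m q
  -- d ^ g is rational
  set c : ℚ := (A : ℚ) ^ a * (B : ℚ) ^ b with hc
  have hAne : (A : ℚ) ≠ 0 := by exact_mod_cast hA0.ne'
  have hBne : (B : ℚ) ≠ 0 := by exact_mod_cast hB0.ne'
  have hcr : (c : ℝ) = d ^ g := by
    have h1 : d ^ (g : ℤ) = (d ^ (m : ℤ)) ^ a * (d ^ (q : ℤ)) ^ b := by
      rw [← zpow_mul, ← zpow_mul, ← zpow_add₀ hdne, ← hbez]
    have h2 : d ^ (m : ℤ) = (A : ℝ) := by rw [zpow_natCast, hA]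
    have h3 : d ^ (q : ℤ) = (B : ℝ) := by rw [zpow_natCast, hB]
    rw [← zpow_natCast d g, h1, h2, h3, hc]
    push_cast
    ring
  have hc0 : 0 < c := by
    have : (0 : ℝ) < (c : ℝ) := hcr ▸ pow_pos hd g
    exact_mod_cast this
  -- c ^ (m / g) = A
  set k := m / g with hk
  have hk0 : 0 < k := Nat.div_pos (Nat.le_of_dvd hm0 hgm) hg0
  have hgk : g * k = m := Nat.mul_div_cancel' hgm
  have hck : c ^ k = (A : ℚ) := by
    have : ((c : ℝ)) ^ k = (A : ℝ) := by
      rw [hcr, ← pow_mul, hgk, hA]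
    exact_mod_cast this
  -- c is an algebraic integer, hence an integer
  have hint : IsIntegral ℤ c := by
    refine IsIntegral.of_pow hk0 ?_
    rw [hck]
    have : ((A : ℤ) : ℚ) = (A : ℚ) := by push_cast; rfl
    exact this ▸ isIntegral_algebraMap
  obtain ⟨y, hy⟩ := IsIntegrallyClosed.isIntegral_iff.mp hint
  have hyc : (y : ℚ) = c := hy
  have hy0 : 0 < y := by exact_mod_cast hyc ▸ hc0
  -- so g ∈ S, hence m ≤ g
  have hgS : m ≤ g := hmin ⟨hg0, y.toNat, by omega, by
    rw [← hcr, ← hyc]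
    exact_mod_cast (Int.toNat_of_nonneg hy0.le).symm⟩
  have : g = m := le_antisymm (Nat.le_of_dvd hm0 hgm) hgS
  exact this ▸ hgq
end

section
/- Let x₀,…,xₙ be positive integers with weights q₀,…,qₙ and let d = wgcd(x₀,…,xₙ). Then the tuple y with y_i = x_i / d^{q_i} consists of integers and satisfies wgcd(y₀,…,yₙ) = 1. -/
/-- If `d = wgcd(x₀,…,xₙ)` with weights `q₀,…,qₙ`, then the tuple `y i = x i / d ^ q i`
is a tuple of integers with `wgcd(y) = 1` (i.e. it is normalized). -/
theorem normalization_wgcd_eq_one {n : ℕ} (q x : Fin (n + 1) → ℕ)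
    (hq : ∀ i, 0 < q i) (hx : ∀ i, 0 < x i) (d : ℕ)
    (hd : IsGreatest {d : ℕ | 0 < d ∧ ∀ i, d ^ q i ∣ x i} d) :
    (∀ i, d ^ q i ∣ x i) ∧
      IsGreatest {e : ℕ | 0 < e ∧ ∀ i, e ^ q i ∣ x i / d ^ q i} 1 := by
  obtain ⟨⟨hdpos, hdvd⟩, hub⟩ := hd
  refine ⟨hdvd, ⟨one_pos, fun i => by simp⟩, ?_⟩
  rintro e ⟨hepos, he⟩
  have key : ∀ i, (e * d) ^ q i ∣ x i := by
    intro i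
    rw [mul_pow, mul_comm]
    exact (Nat.dvd_div_iff_mul_dvd (hdvd i)).mp (he i)
  have : e * d ≤ d := hub ⟨Nat.mul_pos hepos hdpos, key⟩
  exact Nat.le_of_mul_le_mul_right (by simpa using this) hdpos
end

section
/- With q = q₀⋯qₙ and φ as above, the logarithmic heights satisfy q · log wh_K(p) = log H_K(φ(p)) for every p ∈ WP^n_w(K). -/
/-!
Since `q i ∣ Q`, the local factor `|x_i^{Q/q_i}|_v^{n_v}` is the `Q`-th power of
`|x_i|_v^{n_v/q_i}`. Raising nonnegative reals to the `Q`-th power commutes with the maximum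
over `i` and with the product over `v`, so `H_K(φ(p)) = wh_K(p)^Q`.
-/

theorem Finset.sup'_pow_of_nonneg {R ι : Type*} [Semiring R] [LinearOrder R] [IsOrderedRing R]
    {s : Finset ι} (hs : s.Nonempty) {f : ι → R} (hf : ∀ i ∈ s, 0 ≤ f i) (n : ℕ) :
    s.sup' hs f ^ n = s.sup' hs (fun i => f i ^ n) := by
  obtain ⟨j, hj, hsup⟩ := s.exists_mem_eq_sup' hs f
  refine le_antisymm ?_ (s.sup'_le hs _ fun i hi => ?_)
  · rw [hsup]
    exact s.le_sup' (fun i => f i ^ n) hj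
  · exact pow_le_pow_left₀ (hf i hi) (s.le_sup' f hi) n

-- Unlike `finprod_pow`, no finiteness is needed: for `0 ≤ f a` and `n ≠ 0`, `f a ^ n = 1 ↔ f a = 1`,
-- so both sides fall back to the junk value `1` together.
theorem finprod_pow_of_nonneg {R α : Type*} [CommSemiring R] [LinearOrder R]
    [IsStrictOrderedRing R] {f : α → R} (hf : ∀ a, 0 ≤ f a) (n : ℕ) :
    ∏ᶠ a, f a ^ n = (∏ᶠ a, f a) ^ n := by
  rcases eq_or_ne n 0 with rfl | hn
  · simp
  by_cases hfin : (Function.mulSupport f).Finite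
  · exact (finprod_pow hfin n).symm
  have hsupp : Function.mulSupport (fun a => f a ^ n) = Function.mulSupport f := by
    ext a
    exact (pow_eq_one_iff_of_nonneg (hf a) hn).not
  rw [finprod_of_infinite_mulSupport hfin,
    finprod_of_infinite_mulSupport (hsupp ▸ hfin : (Function.mulSupport _).Infinite), one_pow]

theorem Real.pow_div_pow_eq_rpow_div_pow {a : ℝ} (ha : 0 ≤ a) {k m : ℕ} (hmk : m ∣ k) (n : ℕ) :
    (a ^ (k / m)) ^ n = (a ^ ((n : ℝ) / m)) ^ k := by
  obtain ⟨c, rfl⟩ := hmk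
  rcases eq_or_ne m 0 with rfl | hm
  · simp
  have hm' : (m : ℝ) ≠ 0 := Nat.cast_ne_zero.mpr hm
  rw [Nat.mul_div_cancel_left c (Nat.pos_of_ne_zero hm), pow_mul, ← Real.rpow_mul_natCast ha,
    div_mul_cancel₀ _ hm', Real.rpow_natCast, ← pow_mul, ← pow_mul, mul_comm]

theorem log_weighted_height_general {K : Type*} [Field K] {V : Type*}
    (absv : V → AbsoluteValue K ℝ) (nv : V → ℕ)
    {n : ℕ} (q : Fin (n + 1) → ℕ) (Q : ℕ) (hQ : Q = ∏ i, q i)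
    (x : Fin (n + 1) → K) :
    (Q : ℝ) * Real.log (∏ᶠ v, Finset.univ.sup' Finset.univ_nonempty
        (fun i => absv v (x i) ^ ((nv v : ℝ) / (q i : ℝ)))) =
      Real.log (∏ᶠ v, Finset.univ.sup' Finset.univ_nonempty
        (fun i => absv v (x i ^ (Q / q i)) ^ nv v)) := by
  have hdvd : ∀ i, q i ∣ Q := fun i => hQ ▸ Finset.dvd_prod_of_mem q (Finset.mem_univ i)
  have hnonneg : ∀ v i, 0 ≤ absv v (x i) ^ ((nv v : ℝ) / (q i : ℝ)) :=
    fun v i => Real.rpow_nonneg ((absv v).nonneg _) _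
  have hpow : ∀ v, Finset.univ.sup' Finset.univ_nonempty
      (fun i => absv v (x i) ^ ((nv v : ℝ) / (q i : ℝ))) ^ Q =
        Finset.univ.sup' Finset.univ_nonempty (fun i => absv v (x i ^ (Q / q i)) ^ nv v) := by
    intro v
    simp only [Finset.sup'_pow_of_nonneg _ (fun i _ => hnonneg v i), map_pow,
      Real.pow_div_pow_eq_rpow_div_pow ((absv v).nonneg _) (hdvd _)]
  rw [← Real.log_pow, ← finprod_pow_of_nonneg
    (fun v => Finset.le_sup'_of_le _ (Finset.mem_univ 0) (hnonneg v 0))]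
  exact congrArg Real.log (finprod_congr hpow)

/-- With `Q = q₀⋯qₙ` and `φ([x₀:…:xₙ]) = [x₀^{Q/q₀}:…:xₙ^{Q/qₙ}]`, the logarithmic
heights satisfy `Q · log wh_K(p) = log H_K(φ(p))` for every `p ∈ WP^n_w(K)`. -/
theorem log_weighted_height {K : Type*} [Field K] {V : Type*}
    (absv : V → AbsoluteValue K ℝ) (nv : V → ℕ) (hnv : ∀ v, 0 < nv v)
    (hfin : ∀ y : K, y ≠ 0 → {v | absv v y ≠ 1}.Finite)
    (hprod : ∀ y : K, y ≠ 0 → ∏ᶠ v, absv v y ^ nv v = 1)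
    {n : ℕ} (q : Fin (n + 1) → ℕ) (hq : ∀ i, 0 < q i) (Q : ℕ) (hQ : Q = ∏ i, q i)
    (x : Fin (n + 1) → K) (hx : x ≠ 0) :
    (Q : ℝ) * Real.log (∏ᶠ v, Finset.univ.sup' Finset.univ_nonempty
        (fun i => absv v (x i) ^ ((nv v : ℝ) / (q i : ℝ)))) =
      Real.log (∏ᶠ v, Finset.univ.sup' Finset.univ_nonempty
        (fun i => absv v (x i ^ (Q / q i)) ^ nv v)) :=
  log_weighted_height_general absv nv q Q hQ x
end

section
/- (Kronecker-type statement) Let K be a number field and p = [x₀:…:xₙ] ∈ WP^n_w(K) with x_i ≠ 0 for some fixed i. Let ξ_i be a q_i-th root of x_i (so x_i = ξ_i^{q_i}). If for every j ≠ i the ratio x_j/ξ_i^{q_j} is zero or a root of unity, then wh(p) = 1. -/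
/-!
Every `|x_j|_v` is at most `|ξ|_v ^ q_j`, with equality at `j = i₀`: the ratio `x_j / ξ ^ q_j` is
zero or a root of unity, hence has absolute value `0` or `1`. So the local factor
`max_j |x_j|_v ^ (n_v / q_j)` equals `|ξ|_v ^ n_v`, and the product formula for `ξ ≠ 0` finishes.
-/

namespace AbsoluteValue

variable {R S : Type*} [Semiring R] [Nontrivial R] [Semiring S] [LinearOrder S] [IsStrictOrderedRing S]
  [IsDomain S] (abv : AbsoluteValue R S)

theorem eq_one_of_pow_eq_one {y : R} {m : ℕ} (hm : m ≠ 0) (hy : y ^ m = 1) : abv y = 1 :=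
  (pow_eq_one_iff_of_nonneg (abv.nonneg y) hm).mp (by rw [← abv.map_pow, hy, abv.map_one])

end AbsoluteValue

theorem AbsoluteValue.le_of_div_eq_zero_or_pow_eq_one {K S : Type*} [Field K] [Field S]
    [LinearOrder S] [IsStrictOrderedRing S] (abv : AbsoluteValue K S) {y z : K} (hz : z ≠ 0)
    (h : y / z = 0 ∨ ∃ m : ℕ, 0 < m ∧ (y / z) ^ m = 1) : abv y ≤ abv z := by
  have hyz : abv (y / z) ≤ 1 := by
    rcases h with h | ⟨m, hm, hm1⟩
    · simp [h]
    · exact (abv.eq_one_of_pow_eq_one hm.ne' hm1).le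
  calc abv y = abv (y / z) * abv z := by rw [← map_mul, div_mul_cancel₀ y hz]
    _ ≤ abv z := mul_le_of_le_one_left (abv.nonneg z) hyz

theorem Real.pow_rpow_natCast_div_cancel {a : ℝ} (ha : 0 ≤ a) {q : ℕ} (hq : q ≠ 0) (N : ℕ) :
    (a ^ q) ^ ((N : ℝ) / q) = a ^ N := by
  rw [← Real.rpow_natCast a q, ← Real.rpow_mul ha, mul_div_cancel₀ _ (Nat.cast_ne_zero.mpr hq),
    Real.rpow_natCast]

theorem Finset.univ_sup'_rpow_div_eq_pow {ι : Type*} [Fintype ι] [Nonempty ι] {a : ι → ℝ}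
    (ha : ∀ i, 0 ≤ a i) {b : ℝ} (hb : 0 ≤ b) {q : ι → ℕ} (hq : ∀ i, q i ≠ 0) (N : ℕ)
    (hle : ∀ i, a i ≤ b ^ q i) {i₀ : ι} (h₀ : a i₀ = b ^ q i₀) :
    univ.sup' univ_nonempty (fun i => a i ^ ((N : ℝ) / q i)) = b ^ N := by
  refine le_antisymm (sup'_le _ _ fun i _ => ?_) (le_sup'_of_le _ (mem_univ i₀) ?_)
  · calc a i ^ ((N : ℝ) / q i) ≤ (b ^ q i) ^ ((N : ℝ) / q i) :=
          Real.rpow_le_rpow (ha i) (hle i) (by positivity)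
      _ = b ^ N := Real.pow_rpow_natCast_div_cancel hb (hq i) N
  · rw [h₀, Real.pow_rpow_natCast_div_cancel hb (hq i₀) N]

theorem weighted_height_eq_one_of_roots_of_unity_general {K : Type*} [Field K] {V : Type*}
    (absv : V → AbsoluteValue K ℝ) (nv : V → ℕ)
    (hprod : ∀ y : K, y ≠ 0 → ∏ᶠ v, absv v y ^ nv v = 1)
    {n : ℕ} (q : Fin (n + 1) → ℕ) (hq : ∀ i, 0 < q i)
    (x : Fin (n + 1) → K) (i₀ : Fin (n + 1)) (hx : x i₀ ≠ 0)
    (ξ : K) (hξ : x i₀ = ξ ^ q i₀)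
    (hroots : ∀ j, j ≠ i₀ →
      x j / ξ ^ q j = 0 ∨ ∃ m : ℕ, 0 < m ∧ (x j / ξ ^ q j) ^ m = 1) :
    ∏ᶠ v, Finset.univ.sup' Finset.univ_nonempty
        (fun i => absv v (x i) ^ ((nv v : ℝ) / (q i : ℝ))) = 1 := by
  have hξ0 : ξ ≠ 0 := by
    rintro rfl
    exact hx (by rw [hξ, zero_pow (hq i₀).ne'])
  have hle : ∀ v j, absv v (x j) ≤ absv v ξ ^ q j := fun v j => by
    rw [← map_pow]
    by_cases hj : j = i₀
    · rw [hj, hξ]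
    · exact (absv v).le_of_div_eq_zero_or_pow_eq_one (pow_ne_zero _ hξ0) (hroots j hj)
  have hlocal : ∀ v, Finset.univ.sup' Finset.univ_nonempty
      (fun i => absv v (x i) ^ ((nv v : ℝ) / (q i : ℝ))) = absv v ξ ^ nv v := fun v =>
    Finset.univ_sup'_rpow_div_eq_pow (fun i => (absv v).nonneg _) ((absv v).nonneg ξ)
      (fun i => (hq i).ne') (nv v) (hle v) (by rw [hξ, map_pow])
  rw [finprod_congr hlocal]
  exact hprod ξ hξ0

/-- Kronecker-type statement: let `p = [x₀:…:xₙ] ∈ WP^n_w(K)` with `x i₀ ≠ 0`, and let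
`ξ` be a `q i₀`-th root of `x i₀` (so `x i₀ = ξ ^ q i₀`).  If for every `j ≠ i₀` the
ratio `x j / ξ ^ q j` is zero or a root of unity, then the weighted height
`wh_K(p) = ∏_v max_j |x_j|_v^{n_v/q_j}` equals `1`. -/
theorem weighted_height_eq_one_of_roots_of_unity {K : Type*} [Field K] {V : Type*}
    (absv : V → AbsoluteValue K ℝ) (nv : V → ℕ) (hnv : ∀ v, 0 < nv v)
    (hfin : ∀ y : K, y ≠ 0 → {v | absv v y ≠ 1}.Finite)
    (hprod : ∀ y : K, y ≠ 0 → ∏ᶠ v, absv v y ^ nv v = 1)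
    {n : ℕ} (q : Fin (n + 1) → ℕ) (hq : ∀ i, 0 < q i)
    (x : Fin (n + 1) → K) (i₀ : Fin (n + 1)) (hx : x i₀ ≠ 0)
    (ξ : K) (hξ : x i₀ = ξ ^ q i₀)
    (hroots : ∀ j, j ≠ i₀ →
      x j / ξ ^ q j = 0 ∨ ∃ m : ℕ, 0 < m ∧ (x j / ξ ^ q j) ^ m = 1) :
    ∏ᶠ v, Finset.univ.sup' Finset.univ_nonempty
        (fun i => absv v (x i) ^ ((nv v : ℝ) / (q i : ℝ))) = 1 :=
  weighted_height_eq_one_of_roots_of_unity_general absv nv hprod q hq x i₀ hx ξ hξ hroots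
end
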